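/- Let G = (V,E) be a finite simple undirected connected graph. Then |S| < |N(S)| holds for every nonempty independent set S ⊆ V (equivalently ν̄_G < 0) if and only if G is regularizable and G is not an elementary bipartite graph. -/

import Mathlib

open Finset

variable {V : Type*}

/-- `N(T)`: the set of vertices adjacent to at least one vertex of `T`. -/
def nbhd [Fintype V] [DecidableEq V] (G : SimpleGraph V) [DecidableRel G.Adj]
    (T : Finset V) : Finset V :=
  Finset.univ.filter fun j => ∃ i ∈ T, G.Adj i j

/-- `S` is an independent set of `G`. -/
def IsIndepF (G : SimpleGraph V) (S : Finset V) : Prop :=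
  ∀ i ∈ S, ∀ j ∈ S, ¬ G.Adj i j

/-- `H` is regularizable: there is an assignment of strictly positive integer weights to the
edges of `H` such that the weighted degree (sum of the weights of the incident edges) is the
same value for every vertex. -/
def Regularizable {W : Type*} (H : SimpleGraph W) : Prop :=
  ∃ (w : Sym2 W → ℕ) (c : ℕ), (∀ e ∈ H.edgeSet, 1 ≤ w e) ∧
    ∀ i : W, ∑ᶠ e ∈ H.incidenceSet i, w e = c

/-- `H` is an elementary bipartite graph: `H` is bipartite and every edge of `H` is contained
in a perfect matching. -/
def ElementaryBipartite {W : Type*} (H : SimpleGraph W) : Prop :=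
  (∃ V₁ V₂ : Set W, (∀ v, v ∈ V₁ ∨ v ∈ V₂) ∧ (∀ v, ¬(v ∈ V₁ ∧ v ∈ V₂)) ∧
      ∀ a b, H.Adj a b → (a ∈ V₁ ∧ b ∈ V₂) ∨ (a ∈ V₂ ∧ b ∈ V₁)) ∧
    ∀ e ∈ H.edgeSet, ∃ M : H.Subgraph, M.IsPerfectMatching ∧ e ∈ M.edgeSet

/-!
If every nonempty independent set `S` has `|S| < |N(S)|`, then so does every nonempty proper
vertex set `T` of the connected graph `G`: apply the hypothesis to the independent set
`T \ N(T)`, whose neighbourhood lies in `N(T) \ T`. Hall's theorem then gives, for every dart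
`(u, v)`, a permutation `σ` of the vertices moving each vertex to a neighbour with `σ u = v`;
the edges `s(x, σ x)` form a spanning 2-regular multigraph, so summing their multiplicities over
all darts is a positive regularizing weighting. A bipartition is impossible: both sides are
independent, so each would be smaller than the other.

Conversely, for a weighting with constant weighted degree `c`, counting the weight of the edges
at `S` from both ends gives `c |S| + (weight leaving N(S) outside S) = c |N(S)|`. If
`|N(S)| ≤ |S|` for some nonempty independent `S`, no edge leaves `N(S)` outside `S`, so by
connectivity `G` is bipartite with sides `S` and `N(S)`, and the same identity applied to subsets
of `S` is Hall's condition for a perfect matching through any prescribed edge.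
-/

theorem Finset.exists_injective_mem_of_card_le_card_biUnion_erase {ι α : Type*} [DecidableEq ι]
    [DecidableEq α] (t : ι → Finset α) {i : ι} {a : α} (ha : a ∈ t i)
    (h : ∀ s : Finset ι, i ∉ s → #s ≤ #((s.biUnion t).erase a)) :
    ∃ f : ι → α, Function.Injective f ∧ (∀ x, f x ∈ t x) ∧ f i = a := by
  set t' : ι → Finset α := fun x => if x = i then {a} else (t x).erase a
  have ht' : ∀ s : Finset ι, i ∉ s → s.biUnion t' = (s.biUnion t).erase a := by
    intro s hi
    rw [erase_biUnion]
    exact biUnion_congr rfl fun x hx => if_neg (ne_of_mem_of_not_mem hx hi)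
  have hall : ∀ s : Finset ι, #s ≤ #(s.biUnion t') := by
    intro s
    by_cases hi : i ∈ s
    · have hti : t' i = {a} := if_pos rfl
      rw [← insert_erase hi, biUnion_insert, hti, ← insert_eq, ht' _ (notMem_erase i s),
        card_insert_of_notMem (notMem_erase i s), card_insert_of_notMem (notMem_erase a _)]
      exact Nat.succ_le_succ (h _ (notMem_erase i s))
    · exact (ht' s hi).symm ▸ h s hi
  obtain ⟨f, hinj, hf⟩ := (all_card_le_biUnion_card_iff_exists_injective t').1 hall
  have hfi : f i = a := by simpa [t'] using hf i
  refine ⟨f, hinj, fun x => ?_, hfi⟩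
  by_cases hx : x = i
  · exact hx ▸ hfi ▸ ha
  · exact mem_of_mem_erase (by simpa [t', hx] using hf x)

theorem eq_univ_of_forall_adj_mem [Fintype V] {G : SimpleGraph V} (hconn : G.Connected)
    {T : Finset V} (hT : T.Nonempty) (hclosed : ∀ a ∈ T, ∀ b, G.Adj a b → b ∈ T) :
    T = univ := by
  obtain ⟨t, ht⟩ := hT
  refine eq_univ_of_forall fun x => ?_
  have hreach := (SimpleGraph.reachable_iff_reflTransGen t x).1 (hconn t x)
  induction hreach with
  | refl => exact ht
  | tail _ hab ih => exact hclosed _ ih _ hab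

theorem finsum_incidenceSet_eq_sum_neighborFinset {M : Type*} [AddCommMonoid M]
    (G : SimpleGraph V) (i : V) [Fintype (G.neighborSet i)] (f : Sym2 V → M) :
    ∑ᶠ e ∈ G.incidenceSet i, f e = ∑ j ∈ G.neighborFinset i, f s(i, j) := by
  have himage : G.incidenceSet i = (fun j => s(i, j)) '' G.neighborSet i := by
    ext e
    induction e using Sym2.ind with
    | _ a b =>
      simp only [SimpleGraph.mk'_mem_incidenceSet_iff, Set.mem_image, SimpleGraph.mem_neighborSet,
        Sym2.eq_iff]
      constructor
      · rintro ⟨hab, rfl | rfl⟩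
        · exact ⟨b, hab, Or.inl ⟨rfl, rfl⟩⟩
        · exact ⟨a, hab.symm, Or.inr ⟨rfl, rfl⟩⟩
      · rintro ⟨j, hij, ⟨rfl, rfl⟩ | ⟨rfl, rfl⟩⟩
        · exact ⟨hij, Or.inl rfl⟩
        · exact ⟨hij.symm, Or.inr rfl⟩
  rw [himage, finsum_mem_image fun _ _ _ _ h => Sym2.congr_right.1 h, ← G.coe_neighborFinset,
    finsum_mem_coe_finset]

theorem regularizable_iff_exists_sum_neighborFinset [Fintype V] {G : SimpleGraph V}
    [DecidableRel G.Adj] : Regularizable G ↔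
    ∃ (w : Sym2 V → ℕ) (c : ℕ), (∀ e ∈ G.edgeSet, 1 ≤ w e) ∧
      ∀ i, ∑ j ∈ G.neighborFinset i, w s(i, j) = c := by
  simp only [Regularizable, finsum_incidenceSet_eq_sum_neighborFinset]

theorem SimpleGraph.exists_isPerfectMatching_of_involutive {G : SimpleGraph V} {τ : V → V}
    (hτ : Function.Involutive τ) (hadj : ∀ x, G.Adj x (τ x)) :
    ∃ M : G.Subgraph, M.IsPerfectMatching ∧ ∀ x, M.Adj x (τ x) :=
  ⟨{ verts := Set.univ
     Adj := fun x y => y = τ x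
     adj_sub := by rintro x _ rfl; exact hadj x
     edge_vert := fun _ => Set.mem_univ _
     symm := ⟨by rintro x _ rfl; exact (hτ x).symm⟩ },
   Subgraph.isPerfectMatching_iff.2 fun x => ⟨τ x, rfl, fun _ h => h⟩, fun _ => rfl⟩

theorem SimpleGraph.exists_isPerfectMatching_of_equiv [DecidableEq V] {G : SimpleGraph V}
    {S : Finset V} (e : {x // x ∈ S} ≃ {x // x ∉ S})
    (hadj : ∀ x : {x // x ∈ S}, G.Adj x (e x)) :
    ∃ M : G.Subgraph, M.IsPerfectMatching ∧ ∀ x : {x // x ∈ S}, M.Adj x (e x) := by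
  let τ : V → V := fun x => if hx : x ∈ S then e ⟨x, hx⟩ else e.symm ⟨x, hx⟩
  have hτS : ∀ x : {x // x ∈ S}, τ x = e x := fun x => dif_pos x.2
  have hτSc : ∀ y : {x // x ∉ S}, τ y = e.symm y := fun y => dif_neg y.2
  have hτ : Function.Involutive τ := by
    intro x
    by_cases hx : x ∈ S
    · rw [hτS ⟨x, hx⟩, hτSc, Equiv.symm_apply_apply]
    · rw [hτSc ⟨x, hx⟩, hτS, Equiv.apply_symm_apply]
  have hτadj : ∀ x, G.Adj x (τ x) := by
    intro x
    by_cases hx : x ∈ S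
    · exact hτS ⟨x, hx⟩ ▸ hadj ⟨x, hx⟩
    · have := (hadj (e.symm ⟨x, hx⟩)).symm
      rw [Equiv.apply_symm_apply] at this
      exact hτSc ⟨x, hx⟩ ▸ this
  obtain ⟨M, hM, hMτ⟩ := exists_isPerfectMatching_of_involutive hτ hτadj
  exact ⟨M, hM, fun x => hτS x ▸ hMτ x⟩

section Graph

variable [Fintype V] [DecidableEq V] (G : SimpleGraph V) [DecidableRel G.Adj]

def NegativeVulnerability : Prop :=
  ∀ S : Finset V, S.Nonempty → IsIndepF G S → #S < #(nbhd G S)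

@[simp]
theorem mem_nbhd {T : Finset V} {j : V} : j ∈ nbhd G T ↔ ∃ i ∈ T, G.Adj i j := by
  simp [nbhd]

theorem biUnion_neighborFinset_eq_nbhd (T : Finset V) :
    T.biUnion (fun x => G.neighborFinset x) = nbhd G T := by
  ext j
  simp [SimpleGraph.adj_comm]

variable {G}

theorem IsIndepF.disjoint_nbhd {S : Finset V} (hS : IsIndepF G S) : Disjoint S (nbhd G S) :=
  disjoint_left.2 fun _ hx hxN =>
    let ⟨i, hi, hix⟩ := (mem_nbhd G).1 hxN
    hS i hi _ hx hix

theorem NegativeVulnerability.card_lt_card_nbhd (h : NegativeVulnerability G)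
    (hconn : G.Connected) {T : Finset V} (hT : T.Nonempty) (hTu : T ≠ univ) :
    #T < #(nbhd G T) := by
  set S := T \ nbhd G T
  rcases S.eq_empty_or_nonempty with hS | hS
  · -- `T ⊆ N(T)`, and equality would make `T` closed under adjacency
    have hsub : T ⊆ nbhd G T := sdiff_eq_empty_iff_subset.1 hS
    refine lt_of_not_ge fun hle => hTu (eq_univ_of_forall_adj_mem hconn hT fun a ha b hab => ?_)
    rw [eq_of_subset_of_card_le hsub hle]
    exact (mem_nbhd G).2 ⟨a, ha, hab⟩
  · have hSind : IsIndepF G S := fun i hi j hj hij =>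
      (mem_sdiff.1 hj).2 ((mem_nbhd G).2 ⟨i, (mem_sdiff.1 hi).1, hij⟩)
    have hSN : nbhd G S ⊆ nbhd G T \ T := by
      intro j hj
      obtain ⟨i, hi, hij⟩ := (mem_nbhd G).1 hj
      refine mem_sdiff.2 ⟨(mem_nbhd G).2 ⟨i, (mem_sdiff.1 hi).1, hij⟩, fun hjT => ?_⟩
      exact (mem_sdiff.1 hi).2 ((mem_nbhd G).2 ⟨j, hjT, hij.symm⟩)
    have h1 := h S hS hSind
    have h2 := card_le_card hSN
    have h3 : #S + #(T ∩ nbhd G T) = #T := card_sdiff_add_card_inter _ _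
    have h4 : #(nbhd G T \ T) + #(T ∩ nbhd G T) = #(nbhd G T) := by
      rw [inter_comm]; exact card_sdiff_add_card_inter _ _
    omega

theorem NegativeVulnerability.exists_perm_adj (h : NegativeVulnerability G)
    (hconn : G.Connected) {u v : V} (huv : G.Adj u v) :
    ∃ σ : Equiv.Perm V, (∀ x, G.Adj x (σ x)) ∧ σ u = v := by
  have hall : ∀ s : Finset V, u ∉ s →
      #s ≤ #((s.biUnion fun x => G.neighborFinset x).erase v) := by
    intro s hu
    rw [biUnion_neighborFinset_eq_nbhd]
    rcases s.eq_empty_or_nonempty with rfl | hs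
    · simp
    · have hlt := h.card_lt_card_nbhd hconn hs fun hs => hu (hs ▸ mem_univ u)
      have herase := pred_card_le_card_erase (s := nbhd G s) (a := v)
      omega
  obtain ⟨f, hinj, hf, hfu⟩ := exists_injective_mem_of_card_le_card_biUnion_erase
    (fun x => G.neighborFinset x) ((G.mem_neighborFinset u v).2 huv) hall
  exact ⟨Equiv.ofBijective f (Finite.injective_iff_bijective.1 hinj),
    fun x => (G.mem_neighborFinset _ _).1 (hf x), hfu⟩

def edgeMultiplicity (σ : Equiv.Perm V) : Sym2 V → ℕ :=
  Sym2.lift ⟨fun a b => (if σ a = b then 1 else 0) + if σ b = a then 1 else 0,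
    fun _ _ => add_comm _ _⟩

theorem sum_edgeMultiplicity_neighborFinset {σ : Equiv.Perm V} (hσ : ∀ x, G.Adj x (σ x))
    (i : V) :
    ∑ j ∈ G.neighborFinset i, edgeMultiplicity σ s(i, j) = 2 := by
  have hσi : G.Adj i (σ.symm i) := by simpa using (hσ (σ.symm i)).symm
  have hfwd : ∑ j ∈ G.neighborFinset i, (if σ i = j then 1 else 0) = 1 := by simp [hσ]
  have hbwd : ∑ j ∈ G.neighborFinset i, (if σ j = i then 1 else 0) = 1 := by
    simp_rw [← σ.eq_symm_apply]
    simp [hσi]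
  simp only [edgeMultiplicity, Sym2.lift_mk, sum_add_distrib, hfwd, hbwd]

theorem NegativeVulnerability.regularizable (h : NegativeVulnerability G) (hconn : G.Connected) :
    Regularizable G := by
  choose σ hσ hσd using fun d : G.Dart => h.exists_perm_adj hconn d.adj
  refine regularizable_iff_exists_sum_neighborFinset.2
    ⟨fun e => ∑ d, edgeMultiplicity (σ d) e, 2 * Fintype.card G.Dart, ?_, fun i => ?_⟩
  · intro e he
    induction e using Sym2.ind with
    | _ a b =>
      let d : G.Dart := ⟨(a, b), he⟩
      calc 1 ≤ edgeMultiplicity (σ d) s(a, b) := by simp [edgeMultiplicity, hσd d, d]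
        _ ≤ ∑ d, edgeMultiplicity (σ d) s(a, b) :=
            single_le_sum (f := fun d => edgeMultiplicity (σ d) s(a, b)) (fun _ _ => Nat.zero_le _)
              (mem_univ d)
  · rw [sum_comm]
    simp [sum_edgeMultiplicity_neighborFinset (hσ _), mul_comm]

theorem NegativeVulnerability.card_lt_card_compl (h : NegativeVulnerability G) {S : Finset V}
    (hS : S.Nonempty) (hind : IsIndepF G S) : #S < #Sᶜ :=
  (h S hS hind).trans_le (card_le_card (subset_compl_iff_disjoint_left.2 hind.disjoint_nbhd))

theorem NegativeVulnerability.not_isIndepF_compl (h : NegativeVulnerability G) {S : Finset V}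
    (hS : S.Nonempty) (hind : IsIndepF G S) : ¬ IsIndepF G Sᶜ := fun hcind => by
  have h1 := h.card_lt_card_compl hS hind
  have h2 := h.card_lt_card_compl (card_pos.1 (by omega)) hcind
  rw [compl_compl] at h2
  omega

theorem NegativeVulnerability.not_elementaryBipartite (h : NegativeVulnerability G) [Nonempty V] :
    ¬ ElementaryBipartite G := by
  rintro ⟨⟨V₁, V₂, -, hdis, hedge⟩, -⟩
  classical
  set A := univ.filter (· ∈ V₁)
  have hAind : IsIndepF G A := fun i hi j hj hij => by
    simp only [A, mem_filter, mem_univ, true_and] at hi hj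
    rcases hedge i j hij with ⟨_, hj₂⟩ | ⟨hi₂, _⟩
    exacts [hdis j ⟨hj, hj₂⟩, hdis i ⟨hi, hi₂⟩]
  have hAcind : IsIndepF G Aᶜ := fun i hi j hj hij => by
    simp only [A, mem_compl, mem_filter, mem_univ, true_and] at hi hj
    rcases hedge i j hij with ⟨hi₁, _⟩ | ⟨_, hj₁⟩
    exacts [hi hi₁, hj hj₁]
  rcases A.eq_empty_or_nonempty with hA | hA
  · exact h.not_isIndepF_compl univ_nonempty (by simpa [hA] using hAcind) (by simp [IsIndepF])
  · exact h.not_isIndepF_compl hA hAind hAcind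

variable {w : Sym2 V → ℕ} {c : ℕ}

theorem mul_card_add_sum_eq_mul_card_nbhd
    (hdeg : ∀ i, ∑ j ∈ G.neighborFinset i, w s(i, j) = c) (S : Finset V) :
    c * #S + ∑ t ∈ nbhd G S, ∑ y ∈ G.neighborFinset t \ S, w s(t, y) = c * #(nbhd G S) := by
  have hcount : ∑ x ∈ S, ∑ y ∈ G.neighborFinset x, w s(x, y) =
      ∑ t ∈ nbhd G S, ∑ y ∈ G.neighborFinset t ∩ S, w s(t, y) := by
    rw [sum_comm' (t' := nbhd G S) (s' := fun t => G.neighborFinset t ∩ S)]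
    · exact sum_congr rfl fun _ _ => sum_congr rfl fun _ _ => congrArg w Sym2.eq_swap
    · intro x y
      simp only [SimpleGraph.mem_neighborFinset, mem_inter, mem_nbhd]
      constructor
      · rintro ⟨hx, hxy⟩
        exact ⟨⟨hxy.symm, hx⟩, x, hx, hxy⟩
      · rintro ⟨⟨hyx, hx⟩, -⟩
        exact ⟨hx, hyx.symm⟩
  calc c * #S + ∑ t ∈ nbhd G S, ∑ y ∈ G.neighborFinset t \ S, w s(t, y)
      = ∑ t ∈ nbhd G S, (∑ y ∈ G.neighborFinset t ∩ S, w s(t, y) +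
          ∑ y ∈ G.neighborFinset t \ S, w s(t, y)) := by
        rw [sum_add_distrib, ← hcount]
        simp [hdeg, mul_comm]
    _ = c * #(nbhd G S) := by
        simp [sum_inter_add_sum_sdiff, hdeg, mul_comm]

theorem card_le_card_nbhd (hc : 0 < c) (hdeg : ∀ i, ∑ j ∈ G.neighborFinset i, w s(i, j) = c)
    (S : Finset V) : #S ≤ #(nbhd G S) :=
  Nat.le_of_mul_le_mul_left ((mul_card_add_sum_eq_mul_card_nbhd hdeg S) ▸ Nat.le_add_right _ _) hc

theorem card_lt_card_nbhd_of_adj (hw : ∀ e ∈ G.edgeSet, 1 ≤ w e)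
    (hdeg : ∀ i, ∑ j ∈ G.neighborFinset i, w s(i, j) = c) {S : Finset V} {t y : V}
    (ht : t ∈ nbhd G S) (hy : y ∉ S) (hty : G.Adj t y) : #S < #(nbhd G S) := by
  have hexcess : 1 ≤ ∑ t ∈ nbhd G S, ∑ y ∈ G.neighborFinset t \ S, w s(t, y) :=
    calc 1 ≤ w s(t, y) := hw _ hty
      _ ≤ ∑ y ∈ G.neighborFinset t \ S, w s(t, y) :=
        single_le_sum (f := fun y => w s(t, y)) (fun _ _ => Nat.zero_le _)
          (mem_sdiff.2 ⟨(G.mem_neighborFinset _ _).2 hty, hy⟩)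
      _ ≤ _ := single_le_sum (f := fun t => ∑ y ∈ G.neighborFinset t \ S, w s(t, y))
          (fun _ _ => Nat.zero_le _) ht
  have := mul_card_add_sum_eq_mul_card_nbhd hdeg S
  exact Nat.lt_of_mul_lt_mul_left (a := c) (by omega)

theorem card_le_card_nbhd_erase (hw : ∀ e ∈ G.edgeSet, 1 ≤ w e)
    (hdeg : ∀ i, ∑ j ∈ G.neighborFinset i, w s(i, j) = c) {T : Finset V} {u v : V}
    (huv : G.Adj u v) (hu : u ∉ T) : #T ≤ #((nbhd G T).erase v) := by
  by_cases hv : v ∈ nbhd G T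
  · have := card_lt_card_nbhd_of_adj hw hdeg hv hu huv.symm
    rw [card_erase_of_mem hv]
    omega
  · have hc : 0 < c := calc
      0 < w s(u, v) := hw _ huv
      _ ≤ c := hdeg u ▸ single_le_sum (f := fun j => w s(u, j)) (fun _ _ => Nat.zero_le _)
          ((G.mem_neighborFinset _ _).2 huv)
    rw [erase_eq_of_notMem hv]
    exact card_le_card_nbhd hc hdeg T

theorem exists_equiv_compl_adj (hw : ∀ e ∈ G.edgeSet, 1 ≤ w e)
    (hdeg : ∀ i, ∑ j ∈ G.neighborFinset i, w s(i, j) = c) {S : Finset V} (hind : IsIndepF G S)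
    (hcard : #Sᶜ ≤ #S) {u v : V} (hu : u ∈ S) (huv : G.Adj u v) :
    ∃ e : {x // x ∈ S} ≃ {x // x ∉ S},
      (∀ x : {x // x ∈ S}, G.Adj x (e x)) ∧ (e ⟨u, hu⟩ : V) = v := by
  have hall : ∀ s : Finset {x // x ∈ S}, ⟨u, hu⟩ ∉ s →
      #s ≤ #((s.biUnion fun x => G.neighborFinset x).erase v) := by
    intro s hs
    rw [← image_biUnion (f := Subtype.val) (t := fun x => G.neighborFinset x),
      biUnion_neighborFinset_eq_nbhd, ← card_image_of_injective s Subtype.val_injective]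
    exact card_le_card_nbhd_erase hw hdeg huv (by simpa using fun _ => hs)
  obtain ⟨f, hinj, hf, hfu⟩ := exists_injective_mem_of_card_le_card_biUnion_erase
    (fun x : {x // x ∈ S} => G.neighborFinset x) (i := ⟨u, hu⟩)
    ((G.mem_neighborFinset u v).2 huv) hall
  have hfadj : ∀ x : {x // x ∈ S}, G.Adj x (f x) := fun x => (G.mem_neighborFinset _ _).1 (hf x)
  let g : {x // x ∈ S} → {x // x ∉ S} :=
    fun x => ⟨f x, fun hfx => hind x x.2 (f x) hfx (hfadj x)⟩
  have hginj : Function.Injective g := fun x y hxy => hinj (congrArg Subtype.val hxy)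
  have hgcard : Fintype.card {x // x ∈ S} = Fintype.card {x // x ∉ S} := by
    refine le_antisymm (Fintype.card_le_of_injective g hginj) ?_
    rwa [Fintype.card_subtype_compl, Fintype.card_coe, ← card_compl]
  exact ⟨Equiv.ofBijective g ((Fintype.bijective_iff_injective_and_card g).2 ⟨hginj, hgcard⟩),
    hfadj, hfu⟩

theorem elementaryBipartite_of_card_nbhd_le (hconn : G.Connected) (hw : ∀ e ∈ G.edgeSet, 1 ≤ w e)
    (hdeg : ∀ i, ∑ j ∈ G.neighborFinset i, w s(i, j) = c)
    {S : Finset V} (hS : S.Nonempty) (hind : IsIndepF G S) (hle : #(nbhd G S) ≤ #S) :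
    ElementaryBipartite G := by
  have hback : ∀ t ∈ nbhd G S, ∀ y, G.Adj t y → y ∈ S := fun t ht y hty =>
    by_contra fun hy => (card_lt_card_nbhd_of_adj hw hdeg ht hy hty).not_ge hle
  have hcover : S ∪ nbhd G S = univ := by
    refine eq_univ_of_forall_adj_mem hconn (hS.mono subset_union_left) fun a ha b hab => ?_
    rcases mem_union.1 ha with ha | ha
    · exact mem_union_right _ ((mem_nbhd G).2 ⟨a, ha, hab⟩)
    · exact mem_union_left _ (hback a ha b hab)
  have hN : nbhd G S = Sᶜ := by
    ext x
    rw [mem_compl]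
    refine ⟨fun hx hxS => disjoint_left.1 hind.disjoint_nbhd hxS hx, fun hx => ?_⟩
    exact (mem_union.1 (hcover ▸ mem_univ x)).resolve_left hx
  have hcross : ∀ a b, G.Adj a b → a ∉ S → b ∈ S := fun a b hab ha =>
    hback a (hN ▸ mem_compl.2 ha) b hab
  refine ⟨⟨S, (↑S)ᶜ, fun x => em _, fun x hx => hx.2 hx.1, fun a b hab => ?_⟩,
    fun e he => ?_⟩
  · by_cases ha : a ∈ S
    · exact Or.inl ⟨ha, fun hb => hind a ha b hb hab⟩
    · exact Or.inr ⟨ha, hcross a b hab ha⟩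
  · induction e using Sym2.ind with
    | _ a b =>
      rw [SimpleGraph.mem_edgeSet] at he
      wlog ha : a ∈ S generalizing a b
      · rw [Sym2.eq_swap]
        exact this b a he.symm (hcross a b he ha)
      obtain ⟨e, hadj, hea⟩ := exists_equiv_compl_adj hw hdeg hind (hN ▸ hle) ha he
      obtain ⟨M, hM, hMe⟩ := SimpleGraph.exists_isPerfectMatching_of_equiv e hadj
      exact ⟨M, hM, hea ▸ hMe ⟨a, ha⟩⟩

theorem negativeVulnerability_of_regularizable (hconn : G.Connected) (hreg : Regularizable G)
    (hnot : ¬ ElementaryBipartite G) : NegativeVulnerability G := by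
  obtain ⟨w, c, hw, hdeg⟩ := regularizable_iff_exists_sum_neighborFinset.1 hreg
  intro S hS hind
  by_contra! hle
  exact hnot (elementaryBipartite_of_card_nbhd_le hconn hw hdeg hS hind hle)

end Graph

/-- For a finite simple undirected connected graph `G`, `|S| < |N(S)|` holds for every nonempty
independent set `S ⊆ V` (equivalently `ν̄_G < 0`) if and only if `G` is regularizable and `G`
is not an elementary bipartite graph. -/
theorem neg_vulnerability_iff_regularizable_not_elementaryBipartite
    [Fintype V] [DecidableEq V] (G : SimpleGraph V) [DecidableRel G.Adj]
    (hconn : G.Connected) :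
    (∀ S : Finset V, S.Nonempty → IsIndepF G S → S.card < (nbhd G S).card) ↔
      (Regularizable G ∧ ¬ ElementaryBipartite G) := by
  have : Nonempty V := hconn.nonempty
  exact ⟨fun h => ⟨NegativeVulnerability.regularizable h hconn,
      NegativeVulnerability.not_elementaryBipartite h⟩,
    fun ⟨hreg, hnot⟩ => negativeVulnerability_of_regularizable hconn hreg hnot⟩
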